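/- arXiv:1804.06099 — 4 statements merged into one kernel-verified Lean document; each statement's English description precedes it below -/
import Mathlib

section
/- With S*(1) compact convex containing the origin, h its support function, and w ≠ 0 reachable, if c* is the optimal value of the dual problem (maximize c subject to c·h(λ) ≤ λᵀw and λᵀw > 0), then c*·h(λ) ≥ λᵀw for all λ ∈ ℝ^n. -/
/-!
The support function is nonnegative because `0 ∈ S*(1)`. For `λ` with `λᵀw > 0`, the pair
`(λᵀw / h(λ), λ)` is dual feasible, so optimality gives `λᵀw / h(λ) ≤ c*`; if `h(λ) = 0`, every
`c ≥ 0` would be feasible, contradicting the finiteness of `c*`. For `λᵀw ≤ 0` the claim is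
immediate from `c* ≥ 0` and `h(λ) ≥ 0`.
-/

open Matrix Pointwise

theorem sSup_dotProduct_image_nonneg {ι : Type*} [Fintype ι] {K : Set (ι → ℝ)}
    (hK : IsCompact K) (hK0 : 0 ∈ K) (l : ι → ℝ) :
    0 ≤ sSup ((fun y => l ⬝ᵥ y) '' K) := by
  have hbdd : BddAbove ((fun y => l ⬝ᵥ y) '' K) :=
    (hK.image (continuous_const.dotProduct continuous_id)).bddAbove
  simpa using le_csSup hbdd ⟨0, hK0, rfl⟩

theorem le_mul_of_forall_feasible_le {a b c : ℝ} (hc : 0 ≤ c) (hb : 0 ≤ b)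
    (hopt : ∀ t, 0 ≤ t → t * b ≤ a → 0 < a → t ≤ c) : a ≤ c * b := by
  rcases le_or_gt a 0 with ha | ha
  · exact ha.trans (mul_nonneg hc hb)
  rcases hb.eq_or_lt with rfl | hb
  · have := hopt (c + 1) (by linarith) (by simpa using ha.le) ha
    linarith
  have hfeas : a / b ≤ c := hopt (a / b) (div_pos ha hb).le (div_mul_cancel₀ a hb.ne').le ha
  calc a = a / b * b := (div_mul_cancel₀ a hb.ne').symm
    _ ≤ c * b := mul_le_mul_of_nonneg_right hfeas hb.le

theorem dual_optimal_dominates_general {n : ℕ} (K : Set (Fin n → ℝ))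
    (hKc : IsCompact K) (hK0 : (0 : Fin n → ℝ) ∈ K)
    (w : Fin n → ℝ)
    (h : (Fin n → ℝ) → ℝ) (hdef : ∀ l, h l = sSup ((fun y => l ⬝ᵥ y) '' K))
    (cstar : ℝ)
    (hattain : ∃ lstar : Fin n → ℝ,
      0 ≤ cstar ∧ cstar * h lstar ≤ lstar ⬝ᵥ w ∧ 0 < lstar ⬝ᵥ w)
    (hopt : ∀ (c : ℝ) (l : Fin n → ℝ),
      0 ≤ c → c * h l ≤ l ⬝ᵥ w → 0 < l ⬝ᵥ w → c ≤ cstar) :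
    ∀ l : Fin n → ℝ, l ⬝ᵥ w ≤ cstar * h l := by
  obtain ⟨-, hcstar, -, -⟩ := hattain
  intro l
  have hl : 0 ≤ h l := hdef l ▸ sSup_dotProduct_image_nonneg hKc hK0 l
  exact le_mul_of_forall_feasible_le hcstar hl (fun c => hopt c l)

/-- Theorem 2: if `c*` is the optimal value of the dual problem
(maximize `c` subject to `c·h(λ) ≤ λᵀw`, `λᵀw > 0`), then
`c*·h(λ) ≥ λᵀw` for all `λ ∈ ℝⁿ`. -/
theorem dual_optimal_dominates {n : ℕ} (K : Set (Fin n → ℝ))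
    (hKc : IsCompact K) (hKconv : Convex ℝ K) (hK0 : (0 : Fin n → ℝ) ∈ K)
    (w : Fin n → ℝ) (hw : w ≠ 0)
    (c₀ : ℝ) (hc₀ : 0 < c₀) (hreach : w ∈ c₀ • K)
    (h : (Fin n → ℝ) → ℝ) (hdef : ∀ l, h l = sSup ((fun y => l ⬝ᵥ y) '' K))
    (cstar : ℝ)
    (hattain : ∃ lstar : Fin n → ℝ,
      0 ≤ cstar ∧ cstar * h lstar ≤ lstar ⬝ᵥ w ∧ 0 < lstar ⬝ᵥ w)
    (hopt : ∀ (c : ℝ) (l : Fin n → ℝ),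
      0 ≤ c → c * h l ≤ l ⬝ᵥ w → 0 < l ⬝ᵥ w → c ≤ cstar) :
    ∀ l : Fin n → ℝ, l ⬝ᵥ w ≤ cstar * h l :=
  dual_optimal_dominates_general K hKc hK0 w h hdef cstar hattain hopt
end

section
/- Strong duality: with S*(1) compact convex containing the origin and w ≠ 0 reachable, if (c*, λ*) is an optimal solution of the dual problem (maximize c subject to c·h(λ) ≤ λᵀw, λᵀw > 0), then c* is the optimal value of the primal problem: minimize c subject to w ∈ c·S*(1). -/
/-!
Weak duality `c' ≤ c` for a dual feasible `(c', l)` and a primal feasible `c` follows from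
`l ⬝ᵥ w = c (l ⬝ᵥ y) ≤ c h(l)`. Conversely, if `w ∉ c* • S*(1)`, a hyperplane strictly separating
`w` from the compact convex set `c* • S*(1)` gives `l` with `c* h(l) < l ⬝ᵥ w` (the support function
is attained on a compact set), and `0 < l ⬝ᵥ w` because `0 ∈ S*(1)`. The strict inequality leaves
room for a dual feasible `c > c*`, contradicting optimality; hence `c*` is itself primal feasible.
-/

open Matrix Pointwise Filter Topology

theorem exists_gt_mul_lt_of_mul_lt {a b d : ℝ} (h : a * b < d) : ∃ c > a, c * b < d := by
  have hnear : ∀ᶠ c in 𝓝 a, c * b < d :=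
    ((continuous_id.mul continuous_const).tendsto a).eventually (gt_mem_nhds h)
  obtain ⟨c, hcb, hac⟩ := ((hnear.filter_mono nhdsWithin_le_nhds).and self_mem_nhdsWithin).exists
    (f := 𝓝[>] a)
  exact ⟨c, hac, hcb⟩

theorem exists_strongDual_mul_lt_of_notMem_smul {E : Type*} [TopologicalSpace E] [T2Space E]
    [AddCommGroup E] [IsTopologicalAddGroup E] [Module ℝ E] [ContinuousSMul ℝ E]
    [LocallyConvexSpace ℝ E] {K : Set E} (hKc : IsCompact K) (hKconv : Convex ℝ K) {c : ℝ}
    {w : E} (hw : w ∉ c • K) : ∃ f : StrongDual ℝ E, ∀ y ∈ K, c * f y < f w := by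
  obtain ⟨f, u, hfu, huw⟩ :=
    geometric_hahn_banach_closed_point (hKconv.smul c) (hKc.smul c).isClosed hw
  refine ⟨f, fun y hy => ?_⟩
  have := hfu _ (Set.smul_mem_smul_set hy)
  rw [map_smul, smul_eq_mul] at this
  linarith

section SupportFunction

variable {ι : Type*} [Fintype ι]

/-- The support function `h` of `K`. -/
noncomputable def supportFn (K : Set (ι → ℝ)) (l : ι → ℝ) : ℝ :=
  sSup ((fun y => l ⬝ᵥ y) '' K)

theorem continuous_dotProduct_left (l : ι → ℝ) : Continuous fun y : ι → ℝ => l ⬝ᵥ y :=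
  continuous_const.dotProduct continuous_id

theorem dotProduct_le_supportFn {K : Set (ι → ℝ)} (hK : IsCompact K) (l : ι → ℝ) {y : ι → ℝ}
    (hy : y ∈ K) : l ⬝ᵥ y ≤ supportFn K l :=
  le_csSup (hK.image (continuous_dotProduct_left l)).bddAbove ⟨y, hy, rfl⟩

theorem exists_supportFn_eq {K : Set (ι → ℝ)} (hK : IsCompact K) (hne : K.Nonempty)
    (l : ι → ℝ) : ∃ y ∈ K, supportFn K l = l ⬝ᵥ y :=
  hK.exists_sSup_image_eq hne (continuous_dotProduct_left l).continuousOn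

theorem le_of_dual_feasible {K : Set (ι → ℝ)} (hK : IsCompact K) {w l : ι → ℝ} {c c' : ℝ}
    (hc : 0 ≤ c) (hw : w ∈ c • K) (hdual : c' * supportFn K l ≤ l ⬝ᵥ w) (hpos : 0 < l ⬝ᵥ w) :
    c' ≤ c := by
  obtain ⟨y, hy, rfl⟩ := hw
  have hle : l ⬝ᵥ (c • y) ≤ c * supportFn K l := by
    rw [dotProduct_smul, smul_eq_mul]
    exact mul_le_mul_of_nonneg_left (dotProduct_le_supportFn hK l hy) hc
  have hsupp : 0 < supportFn K l := pos_of_mul_pos_right (hpos.trans_le hle) hc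
  exact le_of_mul_le_mul_right (hdual.trans hle) hsupp

theorem exists_dual_certificate_of_notMem_smul {K : Set (ι → ℝ)} (hKc : IsCompact K)
    (hKconv : Convex ℝ K) (hK0 : (0 : ι → ℝ) ∈ K) {c : ℝ} {w : ι → ℝ} (hw : w ∉ c • K) :
    ∃ l : ι → ℝ, c * supportFn K l < l ⬝ᵥ w ∧ 0 < l ⬝ᵥ w := by
  classical
  obtain ⟨f, hf⟩ := exists_strongDual_mul_lt_of_notMem_smul hKc hKconv hw
  set l := (dotProductEquiv ℝ ι).symm (f : (ι → ℝ) →ₗ[ℝ] ℝ)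
  have hl : ∀ x, l ⬝ᵥ x = f x := fun x =>
    LinearMap.congr_fun ((dotProductEquiv ℝ ι).apply_symm_apply _) x
  obtain ⟨y, hy, hsupp⟩ := exists_supportFn_eq hKc ⟨0, hK0⟩ l
  refine ⟨l, ?_, ?_⟩
  · rw [hsupp, hl, hl]
    exact hf y hy
  · simpa [hl] using hf 0 hK0

end SupportFunction

theorem strong_duality_general {n : ℕ} (K : Set (Fin n → ℝ))
    (hKc : IsCompact K) (hKconv : Convex ℝ K) (hK0 : (0 : Fin n → ℝ) ∈ K)
    (w : Fin n → ℝ)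
    (h : (Fin n → ℝ) → ℝ) (hdef : ∀ l, h l = sSup ((fun y => l ⬝ᵥ y) '' K))
    (cstar : ℝ) (lstar : Fin n → ℝ)
    (hfeas : 0 ≤ cstar ∧ cstar * h lstar ≤ lstar ⬝ᵥ w ∧ 0 < lstar ⬝ᵥ w)
    (hopt : ∀ (c : ℝ) (l : Fin n → ℝ),
      0 ≤ c → c * h l ≤ l ⬝ᵥ w → 0 < l ⬝ᵥ w → c ≤ cstar) :
    IsLeast {c : ℝ | 0 ≤ c ∧ w ∈ c • K} cstar := by
  obtain rfl : h = supportFn K := funext hdef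
  obtain ⟨hcstar, hdual, hpos⟩ := hfeas
  refine ⟨⟨hcstar, ?_⟩, fun c ⟨hc, hw⟩ => le_of_dual_feasible hKc hc hw hdual hpos⟩
  by_contra hw
  obtain ⟨l, hlt, hlpos⟩ := exists_dual_certificate_of_notMem_smul hKc hKconv hK0 hw
  obtain ⟨c, hgt, hc⟩ := exists_gt_mul_lt_of_mul_lt hlt
  exact (hopt c l (hcstar.trans hgt.le) hc.le hlpos).not_gt hgt

/-- Theorem 3 (strong duality): if `(c*, λ*)` is an optimal solution of the dual
problem, then `c*` is the optimal value of the primal problem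
`min {c ≥ 0 : w ∈ c·S*(1)}`. -/
theorem strong_duality {n : ℕ} (K : Set (Fin n → ℝ))
    (hKc : IsCompact K) (hKconv : Convex ℝ K) (hK0 : (0 : Fin n → ℝ) ∈ K)
    (w : Fin n → ℝ) (hw : w ≠ 0)
    (c₀ : ℝ) (hc₀ : 0 < c₀) (hreach : w ∈ c₀ • K)
    (h : (Fin n → ℝ) → ℝ) (hdef : ∀ l, h l = sSup ((fun y => l ⬝ᵥ y) '' K))
    (cstar : ℝ) (lstar : Fin n → ℝ)
    (hfeas : 0 ≤ cstar ∧ cstar * h lstar ≤ lstar ⬝ᵥ w ∧ 0 < lstar ⬝ᵥ w)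
    (hopt : ∀ (c : ℝ) (l : Fin n → ℝ),
      0 ≤ c → c * h l ≤ l ⬝ᵥ w → 0 < l ⬝ᵥ w → c ≤ cstar) :
    IsLeast {c : ℝ | 0 ≤ c ∧ w ∈ c • K} cstar :=
  strong_duality_general K hKc hKconv hK0 w h hdef cstar lstar hfeas hopt
end

section
/- Optimality condition on impulse times (necessity): suppose w = Σ_{k} Γ(t_k) u_k with Σ_k f(u_k) = c* where c* = λ*ᵀw / h(λ*) is the optimal cost, h(λ) = max_{t ∈ T} max_{u ∈ U(1)} λᵀΓ(t)u, and λ*ᵀw > 0. Then each impulse with u_k ≠ 0 satisfies max_{u ∈ U(1)} λ*ᵀΓ(t_k)u = h(λ*). -/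
open Matrix

/-!
Normalising a nonzero impulse `u` to `u / f u ∈ U(1)` shows that its contribution `λ*ᵀΓ(t)u` to
`λ*ᵀw` is at most `h(λ*) f(u)`. Summing over the impulses gives `λ*ᵀw ≤ h(λ*) Σ f(u_k) = λ*ᵀw`,
so each of these bounds is an equality, and the normalised impulse `u_k / f(u_k)` attains
`h(λ*)` at time `t_k`.
-/

section PositivelyHomogeneous

variable {E : Type*} [AddCommGroup E] [Module ℝ E] {C : Set E} {f : E → ℝ}

theorem inv_smul_self_mem_sublevel (hcone : ∀ u ∈ C, ∀ α : ℝ, 0 ≤ α → α • u ∈ C)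
    (hhom : ∀ u ∈ C, ∀ α : ℝ, 0 ≤ α → f (α • u) = α * f u) {u : E} (hu : u ∈ C)
    (hfu : 0 < f u) : (f u)⁻¹ • u ∈ {v | v ∈ C ∧ f v ≤ 1} :=
  ⟨hcone u hu _ (inv_nonneg.2 hfu.le),
    (hhom u hu _ (inv_nonneg.2 hfu.le)).trans_le (inv_mul_cancel₀ hfu.ne').le⟩

theorem apply_le_mul_of_le_on_sublevel (hcone : ∀ u ∈ C, ∀ α : ℝ, 0 ≤ α → α • u ∈ C)
    (hhom : ∀ u ∈ C, ∀ α : ℝ, 0 ≤ α → f (α • u) = α * f u) (φ : E →ₗ[ℝ] ℝ) {h : ℝ}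
    (hφ : ∀ v ∈ {v | v ∈ C ∧ f v ≤ 1}, φ v ≤ h) {u : E} (hu : u ∈ C) (hfu : 0 ≤ f u) :
    φ u ≤ h * f u := by
  rcases hfu.lt_or_eq with hpos | hzero
  · have hnorm := hφ _ (inv_smul_self_mem_sublevel hcone hhom hu hpos)
    rw [map_smul, smul_eq_mul, inv_mul_le_iff₀ hpos] at hnorm
    linarith
  · -- `f` vanishes on the ray through `u`, so `φ` is bounded above on that whole ray.
    have hray : ∀ α : ℝ, 0 ≤ α → α * φ u ≤ h := fun α hα => by
      simpa using hφ (α • u) ⟨hcone u hu α hα, by rw [hhom u hu α hα, ← hzero, mul_zero]; simp⟩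
    rw [← hzero, mul_zero]
    by_contra! hφu
    have := hray ((h + 1) / φ u) (div_nonneg (by linarith [hray 0 le_rfl]) hφu.le)
    rw [div_mul_cancel₀ _ hφu.ne'] at this
    linarith

theorem isGreatest_of_apply_eq_mul (hcone : ∀ u ∈ C, ∀ α : ℝ, 0 ≤ α → α • u ∈ C)
    (hhom : ∀ u ∈ C, ∀ α : ℝ, 0 ≤ α → f (α • u) = α * f u) (φ : E →ₗ[ℝ] ℝ) {h : ℝ}
    (hφ : ∀ v ∈ {v | v ∈ C ∧ f v ≤ 1}, φ v ≤ h) {u : E} (hu : u ∈ C) (hfu : 0 < f u)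
    (heq : φ u = h * f u) : IsGreatest {x | ∃ v ∈ {v | v ∈ C ∧ f v ≤ 1}, x = φ v} h := by
  refine ⟨⟨_, inv_smul_self_mem_sublevel hcone hhom hu hfu, ?_⟩, fun x ⟨v, hv, hx⟩ => hx ▸ hφ v hv⟩
  rw [map_smul, smul_eq_mul, heq, mul_comm h, inv_mul_cancel_left₀ hfu.ne']

end PositivelyHomogeneous

theorem optimal_impulse_times_general {n m : ℕ} (T : Set ℝ)
    (Γ : ℝ → Matrix (Fin n) (Fin m) ℝ)
    (C : Set (Fin m → ℝ))
    (hcone : ∀ u ∈ C, ∀ α : ℝ, 0 ≤ α → α • u ∈ C)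
    (f : (Fin m → ℝ) → ℝ)
    (hhom : ∀ u ∈ C, ∀ α : ℝ, 0 ≤ α → f (α • u) = α * f u)
    (hnonneg : ∀ u ∈ C, 0 ≤ f u)
    (hdefin : ∀ u ∈ C, f u = 0 → u = 0)
    (U : Set (Fin m → ℝ)) (hU : U = {u | u ∈ C ∧ f u ≤ 1})
    (l w : Fin n → ℝ)
    (hval : ℝ) (hvalpos : 0 < hval)
    (hh : IsGreatest {x : ℝ | ∃ t ∈ T, ∃ u ∈ U, x = l ⬝ᵥ (Γ t).mulVec u} hval)
    (K : ℕ) (t : Fin K → ℝ) (u : Fin K → (Fin m → ℝ))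
    (ht : ∀ k, t k ∈ T) (hu : ∀ k, u k ∈ C)
    (hreach : (∑ k, (Γ (t k)).mulVec (u k)) = w)
    (hcost : (∑ k, f (u k)) = (l ⬝ᵥ w) / hval) :
    ∀ k, u k ≠ 0 →
      IsGreatest {x : ℝ | ∃ u' ∈ U, x = l ⬝ᵥ (Γ (t k)).mulVec u'} hval := by
  subst hU
  let φ (j : Fin K) : (Fin m → ℝ) →ₗ[ℝ] ℝ := (dotProductBilin ℝ ℝ l).comp (Γ (t j)).mulVecLin
  have hφ (j : Fin K) : ∀ v ∈ {v | v ∈ C ∧ f v ≤ 1}, φ j v ≤ hval :=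
    fun v hv => hh.2 ⟨t j, ht j, v, hv, rfl⟩
  have hle (j : Fin K) : φ j (u j) ≤ hval * f (u j) :=
    apply_le_mul_of_le_on_sublevel hcone hhom (φ j) (hφ j) (hu j) (hnonneg _ (hu j))
  have hsum : ∑ j, φ j (u j) = ∑ j, hval * f (u j) := by
    rw [← Finset.mul_sum, hcost, mul_div_cancel₀ _ hvalpos.ne', ← hreach, dotProduct_sum]
    rfl
  intro k hk
  have hfk : 0 < f (u k) :=
    (hnonneg _ (hu k)).lt_of_ne' fun h0 => hk (hdefin _ (hu k) h0)
  exact isGreatest_of_apply_eq_mul hcone hhom (φ k) (hφ k) (hu k) hfk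
    ((Finset.sum_eq_sum_iff_of_le fun j _ => hle j).1 hsum k (Finset.mem_univ k))

/-- Necessary optimality condition on impulse times: if a sequence of impulses reaches
`w` with total cost equal to the optimal cost `c* = λ*ᵀw / h(λ*)`, then every nonzero
impulse is applied at a time where `max_{u ∈ U(1)} λ*ᵀΓ(t)u` attains `h(λ*)`. -/
theorem optimal_impulse_times {n m : ℕ} (T : Set ℝ) (hT : IsCompact T)
    (Γ : ℝ → Matrix (Fin n) (Fin m) ℝ) (hΓ : ContinuousOn Γ T)
    (C : Set (Fin m → ℝ)) (hC0 : (0 : Fin m → ℝ) ∈ C)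
    (hcone : ∀ u ∈ C, ∀ α : ℝ, 0 ≤ α → α • u ∈ C)
    (f : (Fin m → ℝ) → ℝ)
    (hhom : ∀ u ∈ C, ∀ α : ℝ, 0 ≤ α → f (α • u) = α * f u)
    (hnonneg : ∀ u ∈ C, 0 ≤ f u)
    (hdefin : ∀ u ∈ C, f u = 0 → u = 0)
    (U : Set (Fin m → ℝ)) (hU : U = {u | u ∈ C ∧ f u ≤ 1})
    (hUc : IsCompact U) (hUconv : Convex ℝ U)
    (l w : Fin n → ℝ) (hlw : 0 < l ⬝ᵥ w)
    (hval : ℝ) (hvalpos : 0 < hval)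
    (hh : IsGreatest {x : ℝ | ∃ t ∈ T, ∃ u ∈ U, x = l ⬝ᵥ (Γ t).mulVec u} hval)
    (K : ℕ) (t : Fin K → ℝ) (u : Fin K → (Fin m → ℝ))
    (ht : ∀ k, t k ∈ T) (hu : ∀ k, u k ∈ C)
    (hreach : (∑ k, (Γ (t k)).mulVec (u k)) = w)
    (hcost : (∑ k, f (u k)) = (l ⬝ᵥ w) / hval) :
    ∀ k, u k ≠ 0 →
      IsGreatest {x : ℝ | ∃ u' ∈ U, x = l ⬝ᵥ (Γ (t k)).mulVec u'} hval :=
  optimal_impulse_times_general T Γ C hcone f hhom hnonneg hdefin U hU l w hval hvalpos hh K t u ht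
    hu hreach hcost
end

section
/- Sufficiency of the optimality conditions: let λ* ∈ ℝ^n with λ*ᵀw > 0 satisfy c*·h(λ*) = λ*ᵀw where c* is the minimal cost to reach w and h(λ) = max_{t∈T} max_{u∈U(1)} λᵀΓ(t)u. If impulses (t_k, u_k) satisfy (1) Σ_k Γ(t_k)u_k = w, (2) each u_k = α_k û_k with α_k ≥ 0, û_k ∈ argmax_{u ∈ U(1)} λ*ᵀΓ(t_k)u, and (3) max_{u∈U(1)} λ*ᵀΓ(t_k)u = h(λ*) whenever α_k > 0, then Σ_k f(u_k) = c*, i.e., the sequence is optimal. -/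
/-!
Pairing with `λ*` turns the `k`-th impulse into `α_k h(λ*)`: either `α_k = 0`, or `t_k` is an
active time. Summing over the reach condition and using `c* h(λ*) = λ*ᵀw` gives `Σ α_k = c*`.
Homogeneity of `f` and `f(û_k) ≤ 1` give `f(u_k) ≤ α_k`, so the sequence costs at most `c*`,
hence exactly `c*` by minimality.
-/

open Matrix

theorem apply_smul_le_of_apply_le_one {E : Type*} [SMul ℝ E] {C : Set E} {f : E → ℝ}
    (hhom : ∀ u ∈ C, ∀ a : ℝ, 0 ≤ a → f (a • u) = a * f u)
    {u : E} (hu : u ∈ C) (hfu : f u ≤ 1) {a : ℝ} (ha : 0 ≤ a) :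
    f (a • u) ≤ a := by
  rw [hhom u hu a ha]
  simpa using mul_le_mul_of_nonneg_left hfu ha

section Impulses

variable {ι : Type*} [Fintype ι] {n m : ℕ}

theorem dotProduct_mulVec_smul_of_active (l : Fin n → ℝ) (A : Matrix (Fin n) (Fin m) ℝ)
    (v : Fin m → ℝ) {a c : ℝ} (ha : 0 ≤ a) (hactive : 0 < a → l ⬝ᵥ A *ᵥ v = c) :
    l ⬝ᵥ A *ᵥ (a • v) = a * c := by
  rw [mulVec_smul, dotProduct_smul, smul_eq_mul]
  rcases ha.eq_or_lt with rfl | hpos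
  · simp
  · rw [hactive hpos]

theorem sum_mul_eq_dotProduct_sum_of_active (l : Fin n → ℝ) (A : ι → Matrix (Fin n) (Fin m) ℝ)
    (v : ι → Fin m → ℝ) {a : ι → ℝ} {c : ℝ} (ha : ∀ k, 0 ≤ a k)
    (hactive : ∀ k, 0 < a k → l ⬝ᵥ A k *ᵥ v k = c) :
    (∑ k, a k) * c = l ⬝ᵥ ∑ k, A k *ᵥ (a k • v k) := by
  rw [dotProduct_sum, Finset.sum_mul]
  exact Finset.sum_congr rfl fun k _ =>
    (dotProduct_mulVec_smul_of_active l (A k) (v k) (ha k) (hactive k)).symm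

end Impulses

theorem optimality_conditions_sufficient_general {n m : ℕ} (T : Set ℝ)
    (Γ : ℝ → Matrix (Fin n) (Fin m) ℝ)
    (C : Set (Fin m → ℝ))
    (hcone : ∀ u ∈ C, ∀ α : ℝ, 0 ≤ α → α • u ∈ C)
    (f : (Fin m → ℝ) → ℝ)
    (hhom : ∀ u ∈ C, ∀ α : ℝ, 0 ≤ α → f (α • u) = α * f u)
    (U : Set (Fin m → ℝ)) (hU : U = {u | u ∈ C ∧ f u ≤ 1})
    (l w : Fin n → ℝ)
    (hval : ℝ) (hvalpos : 0 < hval)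
    (cstar : ℝ)
    (hcstar : IsLeast {c : ℝ | ∃ (K : ℕ) (t : Fin K → ℝ) (u : Fin K → (Fin m → ℝ)),
      (∀ k, t k ∈ T ∧ u k ∈ C) ∧ (∑ k, (Γ (t k)).mulVec (u k)) = w ∧
      c = ∑ k, f (u k)} cstar)
    (hactive : cstar * hval = l ⬝ᵥ w)
    (K : ℕ) (t : Fin K → ℝ) (u : Fin K → (Fin m → ℝ))
    (α : Fin K → ℝ) (uhat : Fin K → (Fin m → ℝ))
    (ht : ∀ k, t k ∈ T)
    (hα : ∀ k, 0 ≤ α k) (huhat : ∀ k, uhat k ∈ U)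
    (hdir : ∀ k, u k = α k • uhat k)
    (htime : ∀ k, 0 < α k → l ⬝ᵥ (Γ (t k)).mulVec (uhat k) = hval)
    (hreach : (∑ k, (Γ (t k)).mulVec (u k)) = w) :
    (∑ k, f (u k)) = cstar := by
  subst hU
  obtain rfl : u = fun k => α k • uhat k := funext hdir
  have hweights : ∑ k, α k = cstar := by
    refine mul_right_cancel₀ hvalpos.ne' ?_
    rw [hactive, ← hreach]
    exact sum_mul_eq_dotProduct_sum_of_active l _ uhat hα htime
  refine le_antisymm ?_ (hcstar.2 ⟨K, t, _, fun k => ⟨ht k, ?_⟩, hreach, rfl⟩)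
  · rw [← hweights]
    exact Finset.sum_le_sum fun k _ =>
      apply_smul_le_of_apply_le_one hhom (huhat k).1 (huhat k).2 (hα k)
  · exact hcone _ (huhat k).1 _ (hα k)

/-- Sufficiency of the optimality conditions: an impulse sequence reaching `w` whose
impulses are nonnegative multiples of argmax directions, applied only at times where
the per-time maximum attains `h(λ*)`, has total cost equal to the minimum cost `c*`. -/
theorem optimality_conditions_sufficient {n m : ℕ} (T : Set ℝ) (hT : IsCompact T)
    (Γ : ℝ → Matrix (Fin n) (Fin m) ℝ) (hΓ : ContinuousOn Γ T)
    (C : Set (Fin m → ℝ)) (hC0 : (0 : Fin m → ℝ) ∈ C)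
    (hcone : ∀ u ∈ C, ∀ α : ℝ, 0 ≤ α → α • u ∈ C)
    (f : (Fin m → ℝ) → ℝ)
    (hhom : ∀ u ∈ C, ∀ α : ℝ, 0 ≤ α → f (α • u) = α * f u)
    (hnonneg : ∀ u ∈ C, 0 ≤ f u)
    (U : Set (Fin m → ℝ)) (hU : U = {u | u ∈ C ∧ f u ≤ 1})
    (hUc : IsCompact U) (hUconv : Convex ℝ U)
    (l w : Fin n → ℝ) (hlw : 0 < l ⬝ᵥ w)
    (hval : ℝ) (hvalpos : 0 < hval)
    (hh : IsGreatest {x : ℝ | ∃ t ∈ T, ∃ u ∈ U, x = l ⬝ᵥ (Γ t).mulVec u} hval)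
    (cstar : ℝ)
    (hcstar : IsLeast {c : ℝ | ∃ (K : ℕ) (t : Fin K → ℝ) (u : Fin K → (Fin m → ℝ)),
      (∀ k, t k ∈ T ∧ u k ∈ C) ∧ (∑ k, (Γ (t k)).mulVec (u k)) = w ∧
      c = ∑ k, f (u k)} cstar)
    (hactive : cstar * hval = l ⬝ᵥ w)
    (K : ℕ) (t : Fin K → ℝ) (u : Fin K → (Fin m → ℝ))
    (α : Fin K → ℝ) (uhat : Fin K → (Fin m → ℝ))
    (ht : ∀ k, t k ∈ T)
    (hα : ∀ k, 0 ≤ α k) (huhat : ∀ k, uhat k ∈ U)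
    (hdir : ∀ k, u k = α k • uhat k)
    (hargmax : ∀ k, IsGreatest {x : ℝ | ∃ u' ∈ U, x = l ⬝ᵥ (Γ (t k)).mulVec u'}
      (l ⬝ᵥ (Γ (t k)).mulVec (uhat k)))
    (htime : ∀ k, 0 < α k → l ⬝ᵥ (Γ (t k)).mulVec (uhat k) = hval)
    (hreach : (∑ k, (Γ (t k)).mulVec (u k)) = w) :
    (∑ k, f (u k)) = cstar :=
  optimality_conditions_sufficient_general T Γ C hcone f hhom U hU l w hval hvalpos cstar hcstar
    hactive K t u α uhat ht hα huhat hdir htime hreach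
end
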